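/- Let (L, d) be a metric space equipped with a Borel measure μ_L, let n be a natural number and C > 0 a constant such that μ_L of every closed ball of radius s > 0 is at most C·sⁿ. Then there exists a constant C′ > 0 such that for every c ∈ (0, 1], every y ∈ L, and every r ≥ 0, one has (1/cⁿ) · (Lebesgue ⊗ μ_L)({(λ, y′) ∈ ℝ × L : sqrt((d(y, y′)/c)² + λ²) ≤ r}) ≤ C′ · (1 + r)^(n+1). -/

import Mathlib

/-!
The sublevel set `{√((d(y, y′)/c)² + λ²) ≤ r}` lies in the box `[-r, r] × B̄(y, c r)`, whose
product measure is at most `2r · C (c r)ⁿ`. The factor `cⁿ` cancels against the normalisation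
`1 / cⁿ` of the Haar system, leaving `2C rⁿ⁺¹ ≤ 2C (1 + r)ⁿ⁺¹` uniformly in `c`.
-/

open MeasureTheory Metric Set

theorem setOf_sqrt_le_subset_Icc_prod_closedBall {L : Type*} [PseudoMetricSpace L] {c : ℝ}
    (hc : 0 < c) (y : L) (r : ℝ) :
    {p : ℝ × L | √((dist y p.2 / c) ^ 2 + p.1 ^ 2) ≤ r} ⊆ Icc (-r) r ×ˢ closedBall y (c * r) := by
  rintro ⟨t, z⟩ h
  have ht : |t| ≤ r := (Real.abs_le_sqrt (le_add_of_nonneg_left (sq_nonneg _))).trans h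
  have hz : |dist y z / c| ≤ r := (Real.abs_le_sqrt (le_add_of_nonneg_right (sq_nonneg _))).trans h
  rw [abs_of_nonneg (by positivity), div_le_iff₀' hc] at hz
  exact ⟨abs_le.mp ht, by rwa [mem_closedBall, dist_comm]⟩

theorem volume_prod_Icc_closedBall_le {L : Type*} [PseudoMetricSpace L] [MeasurableSpace L]
    {μ : Measure L} {n : ℕ} {C : ℝ}
    (hvol : ∀ (y : L) (s : ℝ), 0 < s → μ (closedBall y s) ≤ ENNReal.ofReal (C * s ^ n))
    (y : L) {c r : ℝ} (hc : 0 < c) (hr : 0 ≤ r) :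
    (volume.prod μ) (Icc (-r) r ×ˢ closedBall y (c * r))
      ≤ ENNReal.ofReal (2 * C * c ^ n * r ^ (n + 1)) := by
  refine (Measure.prod_prod_le _ _).trans ?_
  rw [Real.volume_Icc]
  rcases hr.eq_or_lt with rfl | hr
  · simp
  calc ENNReal.ofReal (r - -r) * μ (closedBall y (c * r))
      ≤ ENNReal.ofReal (2 * r) * ENNReal.ofReal (C * (c * r) ^ n) := by
        rw [sub_neg_eq_add, ← two_mul]
        gcongr
        exact hvol y _ (by positivity)
    _ = ENNReal.ofReal (2 * C * c ^ n * r ^ (n + 1)) := by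
        rw [← ENNReal.ofReal_mul (by positivity)]
        ring_nf

theorem length_function_polynomial_growth_general {L : Type*} [MetricSpace L]
    [MeasurableSpace L] (μL : Measure L) (n : ℕ) (C : ℝ) (hC : 0 < C)
    (hvol : ∀ (y : L) (s : ℝ), 0 < s →
      μL (Metric.closedBall y s) ≤ ENNReal.ofReal (C * s ^ n)) :
    ∃ C' : ℝ, 0 < C' ∧
      ∀ c : ℝ, c ∈ Set.Ioc (0:ℝ) 1 → ∀ (y : L) (r : ℝ), 0 ≤ r →
        ENNReal.ofReal (1 / c ^ n) *
          (volume.prod μL)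
            {p : ℝ × L | Real.sqrt ((dist y p.2 / c) ^ 2 + p.1 ^ 2) ≤ r}
          ≤ ENNReal.ofReal (C' * (1 + r) ^ (n + 1)) := by
  refine ⟨2 * C, by positivity, fun c ⟨hc, _⟩ y r hr => ?_⟩
  have hbox := (measure_mono (setOf_sqrt_le_subset_Icc_prod_closedBall hc y r)).trans
    (volume_prod_Icc_closedBall_le hvol y hc hr)
  calc ENNReal.ofReal (1 / c ^ n) *
        (volume.prod μL) {p : ℝ × L | √((dist y p.2 / c) ^ 2 + p.1 ^ 2) ≤ r}
      ≤ ENNReal.ofReal (1 / c ^ n) * ENNReal.ofReal (2 * C * c ^ n * r ^ (n + 1)) := by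
        gcongr
    _ = ENNReal.ofReal (2 * C * r ^ (n + 1)) := by
        rw [← ENNReal.ofReal_mul (by positivity)]
        congr 1
        field_simp
    _ ≤ ENNReal.ofReal (2 * C * (1 + r) ^ (n + 1)) := by
        gcongr
        linarith

/-- Polynomial growth of the length function `sqrt((d(y,y′)/c)² + λ²)` with respect
to the Haar system `(1/cⁿ) dλ dμ_L`, uniformly in `c ∈ (0,1]`, given a polynomial
upper volume bound on balls of `L`. -/
theorem length_function_polynomial_growth {L : Type*} [MetricSpace L]
    [MeasurableSpace L] [BorelSpace L] (μL : Measure L) (n : ℕ) (C : ℝ) (hC : 0 < C)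
    (hvol : ∀ (y : L) (s : ℝ), 0 < s →
      μL (Metric.closedBall y s) ≤ ENNReal.ofReal (C * s ^ n)) :
    ∃ C' : ℝ, 0 < C' ∧
      ∀ c : ℝ, c ∈ Set.Ioc (0:ℝ) 1 → ∀ (y : L) (r : ℝ), 0 ≤ r →
        ENNReal.ofReal (1 / c ^ n) *
          (volume.prod μL)
            {p : ℝ × L | Real.sqrt ((dist y p.2 / c) ^ 2 + p.1 ^ 2) ≤ r}
          ≤ ENNReal.ofReal (C' * (1 + r) ^ (n + 1)) :=
  length_function_polynomial_growth_general μL n C hC hvol
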